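/- arXiv:2110.05946 — 2 statements merged into one kernel-verified Lean document; each statement's English description precedes it below -/
import Mathlib

section
/- Let G be a connected leafless graph of Betti number g (g ≥ 0 arbitrary) and let x be a vertex of G. Then #Aut(G)_x ≤ 2^g · g!, where Aut(G)_x is the subgroup of automorphisms fixing the vertex x. -/
/-- A finite undirected multigraph (allowing loops and multiple edges) on a vertex type `V`
and an edge type `E`: the map `ends` assigns to each edge its unordered pair of endpoints
(a loop is an edge whose two endpoints coincide).  This is the same data as an incidence
map `ε : E → 2^V` taking values in subsets of cardinality 1 or 2. -/
structure Multigraph (V E : Type) where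
  ends : E → Sym2 V

namespace Multigraph

variable {V E : Type} (G : Multigraph V E)

/-- An automorphism of a multigraph: a pair of bijections on vertices and edges
commuting with the incidence map. -/
structure Aut (G : Multigraph V E) where
  toV : Equiv.Perm V
  toE : Equiv.Perm E
  ends_map : ∀ e, G.ends (toE e) = Sym2.map toV (G.ends e)

/-- Degree of the vertex `v` with respect to the edge set `F` (loops counted twice):
the number of edges of `F` incident to `v`, plus the number of loops of `F` at `v`. -/
noncomputable def degIn (F : Set E) (v : V) : ℕ :=
  {e ∈ F | v ∈ G.ends e}.ncard + {e ∈ F | G.ends e = s(v, v)}.ncard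

/-- Degree of a vertex (loops counted twice). -/
noncomputable def degree (v : V) : ℕ := G.degIn Set.univ v

/-- A graph is leafless if every vertex has degree at least two. -/
def Leafless : Prop := ∀ v, 2 ≤ G.degree v

/-- Adjacency: there is an edge with endpoints `u`, `v`. -/
def Adj (u v : V) : Prop := ∃ e, G.ends e = s(u, v)

/-- A graph is connected if it is nonempty and every two vertices are joined by a walk. -/
def Connected : Prop := Nonempty V ∧ ∀ u v : V, Relation.ReflTransGen G.Adj u v

/-- Adjacency using only edges outside the edge set `F`. -/
def AdjOff (F : Set E) (u v : V) : Prop := ∃ e, e ∉ F ∧ G.ends e = s(u, v)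

/-- Adjacency in the subgraph `G ∖ {x}` obtained by deleting the vertex `x`
and all edges incident to it. -/
def AdjOffV (x : V) (u v : V) : Prop := u ≠ x ∧ v ≠ x ∧ G.Adj u v

/-- An edge is a bridge if its endpoints are not joined by a walk avoiding it;
equivalently, its deletion increases the number of connected components. -/
def IsBridge (e : E) : Prop :=
  ∃ u v, G.ends e = s(u, v) ∧ ¬ Relation.ReflTransGen (G.AdjOff {e}) u v

end Multigraph

/-!
The proof is by induction on the number of edges, for graphs that are connected and leafless
except possibly at the root `x`. Along with the bound `2^g g!` for `Aut(G)_x`, one proves the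
bound `2^(g-1) (g-1)!` for the stabilizer of `x` and of a non-bridge edge `e = xy`. If `y = x`
or `deg y ≥ 3`, deleting `e` keeps the graph connected and leafless away from `x` and lowers the
Betti number. If `deg y = 2`, let `e₂` be the other edge at `y`: contracting `e` keeps the Betti
number but makes `e₂` a non-bridge edge at `x`, fixed by every automorphism fixing `x` and `e`.

For `Aut(G)_x`, count the orbit of an edge `e₀` at `x` (orbit–stabilizer). If `e₀` can be chosen
to be a non-bridge, its orbit has at most `deg x ≤ 2g` elements, each with stabilizer at most
`2^(g-1) (g-1)!`. Otherwise every edge `e` at `x` is a bridge. Its stabilizer embeds into the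
product of the rooted automorphism groups of the two sides of `e`, of Betti numbers `g - g_e`
and `g_e ≥ 1`, hence has order at most `2^g g_e (g-1)!`. The branches of `G` at `x` are
disjoint, so `∑ g_e ≤ g`.
-/

open MulAction Relation

theorem Subgroup.card_le_sum_card_inf_stabilizer {M α : Type*} [Group M] [MulAction M α]
    [Finite M] (H : Subgroup M) {a : α} {s : Finset α} (hs : ∀ m ∈ H, m • a ∈ s) :
    Nat.card H ≤ ∑ b ∈ s, Nat.card ↥(H ⊓ stabilizer M b) := by
  classical
  have := Fintype.ofFinite H
  have hfiber (b : α) :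
      Nat.card {m : H // (m : M) • a = b} ≤ Nat.card ↥(H ⊓ stabilizer M b) := by
    rcases isEmpty_or_nonempty {m : H // (m : M) • a = b} with h | ⟨m₀, hm₀⟩
    · simp
    have hm₀' : (m₀ : M)⁻¹ • b = a := inv_smul_eq_iff.2 hm₀.symm
    refine Nat.card_le_card_of_injective (fun m => ⟨(m.1 : M) * (m₀ : M)⁻¹,
      H.mul_mem m.1.2 (H.inv_mem m₀.2), mem_stabilizer_iff.2 (by rw [mul_smul, hm₀', m.2])⟩)
      fun m m' h => Subtype.ext (Subtype.ext (mul_right_cancel (congrArg Subtype.val h)))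
  calc Nat.card H = ∑ b ∈ s, Nat.card {m : H // (m : M) • a = b} := by
        rw [Nat.card_eq_fintype_card, ← Finset.card_univ,
          Finset.card_eq_sum_card_fiberwise (f := fun m : H => (m : M) • a) fun m _ => hs m m.2]
        simp [Nat.card_eq_fintype_card, Fintype.card_subtype]
    _ ≤ _ := Finset.sum_le_sum fun b _ => hfiber b

theorem Sym2.count_toMultiset {α : Type*} [DecidableEq α] (z : Sym2 α) (v : α) :
    z.toMultiset.count v = (if v ∈ z then 1 else 0) + (if z = s(v, v) then 1 else 0) := by
  induction z using Sym2.ind with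
  | _ a b =>
    simp only [Sym2.toMultiset, Sym2.mem_iff, Sym2.eq_iff]
    by_cases ha : v = a <;> by_cases hb : v = b <;> subst_vars <;> simp [*, Ne.symm]

theorem Nat.card_compl_singleton_add_one {α : Type*} [Finite α] (a : α) :
    Nat.card ({a}ᶜ : Set α) + 1 = Nat.card α := by
  rw [Nat.card_coe_set_eq, ← Set.ncard_add_ncard_compl {a}, Set.ncard_singleton, add_comm]

theorem Nat.factorial_mul_factorial_le_mul_factorial {a b : ℕ} (hb : 1 ≤ b) :
    a.factorial * b.factorial ≤ b * (a + b - 1).factorial := by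
  obtain ⟨c, rfl⟩ : ∃ c, b = c + 1 := ⟨b - 1, by omega⟩
  rw [Nat.factorial_succ, show a + (c + 1) - 1 = a + c by omega]
  calc a.factorial * ((c + 1) * c.factorial) = (c + 1) * (a.factorial * c.factorial) := by ring
    _ ≤ (c + 1) * (a + c).factorial := Nat.mul_le_mul_left _
        (Nat.le_of_dvd (Nat.factorial_pos _) (Nat.factorial_mul_factorial_dvd_factorial_add a c))

namespace Multigraph

variable {V E : Type} {G : Multigraph V E}

/-! ### The automorphism group -/

namespace Aut

@[ext] theorem ext {f f' : G.Aut} (hV : f.toV = f'.toV) (hE : f.toE = f'.toE) : f = f' := by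
  cases f; cases f'; cases hV; cases hE; rfl

instance : Group G.Aut where
  mul f f' := ⟨f.toV * f'.toV, f.toE * f'.toE, fun e => by
    simp only [Equiv.Perm.mul_apply, f.ends_map, f'.ends_map, Sym2.map_map]; rfl⟩
  one := ⟨1, 1, fun e => by simp⟩
  inv f := ⟨f.toV⁻¹, f.toE⁻¹, fun e => by
    simp only [Equiv.Perm.coe_inv]
    conv_rhs => rw [← f.toE.apply_symm_apply e, f.ends_map, Sym2.map_map]
    simp⟩
  mul_assoc _ _ _ := ext (mul_assoc _ _ _) (mul_assoc _ _ _)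
  one_mul _ := ext (one_mul _) (one_mul _)
  mul_one _ := ext (mul_one _) (mul_one _)
  inv_mul_cancel f := ext (inv_mul_cancel f.toV) (inv_mul_cancel f.toE)

@[simp] theorem inv_toV (f : G.Aut) : f⁻¹.toV = f.toV⁻¹ := rfl
@[simp] theorem inv_toE (f : G.Aut) : f⁻¹.toE = f.toE⁻¹ := rfl

instance : MulAction G.Aut V where
  smul f v := f.toV v
  one_smul _ := rfl
  mul_smul _ _ _ := rfl

instance : MulAction G.Aut E where
  smul f e := f.toE e
  one_smul _ := rfl
  mul_smul _ _ _ := rfl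

@[simp] theorem smul_edge (f : G.Aut) (e : E) : f • e = f.toE e := rfl

instance [Finite V] [Finite E] : Finite G.Aut :=
  Finite.of_injective (fun f : G.Aut => (f.toV, f.toE))
    fun _ _ h => ext (congrArg Prod.fst h) (congrArg Prod.snd h)

theorem mem_ends_iff (f : G.Aut) {v : V} {e : E} :
    f.toV v ∈ G.ends (f.toE e) ↔ v ∈ G.ends e := by
  rw [f.ends_map, Sym2.mem_map]
  exact ⟨fun ⟨_, ha, h⟩ => f.toV.injective h ▸ ha, fun h => ⟨v, h, rfl⟩⟩

theorem mem_ends_of_mem_stabilizer {f : G.Aut} {x : V} (hf : f ∈ stabilizer G.Aut x) {e : E}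
    (he : x ∈ G.ends e) : x ∈ G.ends (f.toE e) := by
  have hf : f.toV x = x := hf
  simpa [hf] using f.mem_ends_iff.2 he

theorem apply_eq_of_ends_eq (f : G.Aut) {e : E} {x y : V} (he : G.ends e = s(x, y))
    (hfx : f.toV x = x) (hfe : f.toE e = e) : f.toV y = y := by
  have := f.ends_map e
  rw [hfe, he, Sym2.map_mk, hfx, Sym2.congr_right] at this
  exact this.symm

theorem adjOff {F : Set E} (f : G.Aut) {u v : V} (h : G.AdjOff F u v) :
    G.AdjOff (f.toE '' F) (f.toV u) (f.toV v) := by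
  obtain ⟨e, he, hends⟩ := h
  exact ⟨f.toE e, by rwa [f.toE.injective.mem_set_image],
    by rw [f.ends_map, hends, Sym2.map_mk]⟩

theorem reachOff {F : Set E} (f : G.Aut) {u v : V} (h : ReflTransGen (G.AdjOff F) u v) :
    ReflTransGen (G.AdjOff (f.toE '' F)) (f.toV u) (f.toV v) :=
  ReflTransGen.lift f.toV (fun _ _ => f.adjOff) _ _ h

theorem isBridge (f : G.Aut) {e : E} (h : G.IsBridge e) : G.IsBridge (f.toE e) := by
  obtain ⟨u, v, he, hr⟩ := h
  refine ⟨f.toV u, f.toV v, by rw [f.ends_map, he, Sym2.map_mk], fun h' => hr ?_⟩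
  simpa [Set.image_singleton] using f⁻¹.reachOff h'

theorem isBridge_iff (f : G.Aut) {e : E} : G.IsBridge (f.toE e) ↔ G.IsBridge e :=
  ⟨fun h => by simpa using f⁻¹.isBridge h, f.isBridge⟩

end Aut

/-! ### Walks and bridges -/

theorem exists_ends_eq (G : Multigraph V E) (e : E) : ∃ a b, G.ends e = s(a, b) :=
  Sym2.exists.1 ⟨_, rfl⟩

instance : Std.Symm G.Adj where
  symm _ _ := fun ⟨e, he⟩ => ⟨e, he.trans Sym2.eq_swap⟩

instance {F : Set E} : Std.Symm (G.AdjOff F) where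
  symm _ _ := fun ⟨e, hF, he⟩ => ⟨e, hF, he.trans Sym2.eq_swap⟩

theorem reachOff_of_not_isBridge {e : E} (hnb : ¬G.IsBridge e) {u v : V}
    (h : ReflTransGen G.Adj u v) : ReflTransGen (G.AdjOff {e}) u v :=
  ReflTransGen.lift' id (fun a b ⟨e', he'⟩ => by
    by_cases h : e' = e
    · subst h
      by_contra hr
      exact hnb ⟨a, b, he', hr⟩
    · exact .single ⟨e', h, he'⟩) _ _ h

theorem not_isBridge_of_reachOff {e : E} {u v : V} (he : G.ends e = s(u, v))
    (h : ReflTransGen (G.AdjOff {e}) u v) : ¬G.IsBridge e := by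
  rintro ⟨a, b, hab, hr⟩
  rw [he, Sym2.eq_iff] at hab
  rcases hab with ⟨rfl, rfl⟩ | ⟨rfl, rfl⟩
  exacts [hr h, hr (symm_of _ h)]

theorem reachOff_of_mem_ends {b b' : E} (hne : b ≠ b') {x c : V} (hx : x ∈ G.ends b)
    (hc : c ∈ G.ends b) : ReflTransGen (G.AdjOff {b'}) x c := by
  obtain ⟨y, hy⟩ := Sym2.mem_iff_exists.1 hx
  rw [hy, Sym2.mem_iff] at hc
  rcases hc with rfl | rfl
  exacts [.refl, .single ⟨b, hne, hy⟩]

theorem subsingleton_aut_of_forall_notMem {x : V} (hc : G.Connected) (hx : ∀ e, x ∉ G.ends e) :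
    Subsingleton G.Aut := by
  have hV (v : V) : v = x := by
    rcases (hc.2 x v).cases_head with h | ⟨c, ⟨e, he⟩, -⟩
    · exact h.symm
    · exact absurd (by simp [he]) (hx e)
  have hE (e : E) : False := by
    obtain ⟨a, b, hab⟩ := G.exists_ends_eq e
    exact hx e (by simp [hab, hV a])
  exact ⟨fun f f' => Aut.ext (Equiv.ext fun v => by rw [hV v, hV (f.toV x), hV (f'.toV x)])
    (Equiv.ext fun e => (hE e).elim)⟩

/-! ### Degrees -/

theorem degIn_congr {F F' : Set E} {v : V} (h : ∀ e, v ∈ G.ends e → (e ∈ F ↔ e ∈ F')) :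
    G.degIn F v = G.degIn F' v := by
  have hloop (e) (he : G.ends e = s(v, v)) : e ∈ F ↔ e ∈ F' := h e (he ▸ Sym2.mem_mk_left v v)
  unfold degIn
  congr 2 <;> ext e <;> simp only [Set.mem_sep_iff]
  exacts [and_congr_left (h e), and_congr_left (hloop e)]

theorem degIn_compl_singleton_of_notMem {e : E} {v : V} (hv : v ∉ G.ends e) :
    G.degIn {e}ᶜ v = G.degree v :=
  degIn_congr fun e' he' => by
    simp only [Set.mem_compl_singleton_iff, Set.mem_univ, iff_true]
    rintro rfl
    exact hv he'

theorem degIn_compl_singleton_add_one [Finite E] {e : E} {v : V} (hv : v ∈ G.ends e)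
    (hloop : G.ends e ≠ s(v, v)) : G.degIn {e}ᶜ v + 1 = G.degree v := by
  have hinc : {e' ∈ ({e}ᶜ : Set E) | v ∈ G.ends e'} = {e' | v ∈ G.ends e'} \ {e} := by
    ext; simp [and_comm]
  have hloops : {e' ∈ ({e}ᶜ : Set E) | G.ends e' = s(v, v)} = {e' | G.ends e' = s(v, v)} := by
    ext e'
    simp only [Set.mem_compl_singleton_iff, Set.mem_ofPred_eq, and_iff_right_iff_imp]
    rintro h rfl
    exact hloop h
  have := Set.ncard_sdiff_singleton_add_one (show e ∈ {e' | v ∈ G.ends e'} from hv)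
  rw [degree, degIn, degIn, hinc, hloops, Set.sep_univ, Set.sep_univ]
  omega

theorem ncard_incident_le_degree (v : V) : {e | v ∈ G.ends e}.ncard ≤ G.degree v := by
  rw [degree, degIn, Set.sep_univ]
  exact Nat.le_add_right _ _

theorem one_le_degree [Finite E] {e : E} {v : V} (hv : v ∈ G.ends e) : 1 ≤ G.degree v :=
  ((Set.ncard_pos (Set.toFinite _)).2 ⟨e, hv⟩).trans_le (ncard_incident_le_degree v)

theorem degree_eq_sum_count [Fintype E] [DecidableEq V] (v : V) :
    G.degree v = ∑ e, (G.ends e).toMultiset.count v := by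
  simp only [Sym2.count_toMultiset, Finset.sum_add_distrib, Finset.sum_boole, Nat.cast_id]
  rw [degree, degIn, Set.sep_univ, Set.sep_univ, Set.ncard_eq_toFinset_card',
    Set.ncard_eq_toFinset_card']
  simp

theorem sum_degree [Fintype V] [Fintype E] : ∑ v, G.degree v = 2 * Fintype.card E := by
  classical
  simp_rw [degree_eq_sum_count]
  rw [Finset.sum_comm]
  simp [Multiset.sum_count_eq_card, Sym2.card_toMultiset, mul_comm]

theorem degree_add_two_mul_card_le [Finite V] [Finite E] {x : V}
    (h : ∀ v, v ≠ x → 2 ≤ G.degree v) : G.degree x + 2 * Nat.card V ≤ 2 * Nat.card E + 2 := by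
  classical
  have := Fintype.ofFinite V
  have := Fintype.ofFinite E
  have hrest : (Fintype.card V - 1) * 2 ≤ ∑ v ∈ Finset.univ.erase x, G.degree v := by
    simpa [Finset.card_erase_of_mem] using Finset.card_nsmul_le_sum (Finset.univ.erase x)
      G.degree 2 fun v hv => h v (Finset.ne_of_mem_erase hv)
  have hsum : G.degree x + ∑ v ∈ Finset.univ.erase x, G.degree v = 2 * Fintype.card E := by
    rw [Finset.add_sum_erase _ G.degree (Finset.mem_univ x), sum_degree]
  have := Fintype.card_pos_iff.2 ⟨x⟩
  rw [Nat.card_eq_fintype_card, Nat.card_eq_fintype_card]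
  omega

theorem exists_other_edge_of_degree_eq_two [Finite E] {e : E} {x y : V}
    (he : G.ends e = s(x, y)) (hxy : x ≠ y) (hy : G.degree y = 2) :
    ∃ e₂ y₂, e₂ ≠ e ∧ G.ends e₂ = s(y, y₂) ∧ y₂ ≠ y ∧ ∀ e', y ∈ G.ends e' → e' = e ∨ e' = e₂ := by
  set I := {e' | y ∈ G.ends e'}
  set L := {e' | G.ends e' = s(y, y)}
  have heI : e ∈ I := by simp [I, he]
  have hLI : L ⊆ I \ {e} := fun e' h => ⟨by simp [I, show G.ends e' = _ from h], fun h' => by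
    have h1 : G.ends e' = s(y, y) := h
    rw [show e' = e from h', he] at h1
    exact hxy (by simpa using h1)⟩
  have hdeg : I.ncard + L.ncard = 2 := by rw [← hy, degree, degIn, Set.sep_univ, Set.sep_univ]
  have := Set.ncard_sdiff_singleton_add_one heI
  have := Set.ncard_le_ncard hLI
  obtain ⟨e₂, he₂⟩ := Set.ncard_eq_one.1 (by omega : (I \ {e}).ncard = 1)
  have hL : L = ∅ := (Set.ncard_eq_zero (Set.toFinite _)).1 (by omega)
  have he₂I : e₂ ∈ I \ {e} := he₂ ▸ rfl
  obtain ⟨y₂, hy₂⟩ := Sym2.mem_iff_exists.1 he₂I.1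
  refine ⟨e₂, y₂, he₂I.2, hy₂, fun h => ?_, fun e' he' => ?_⟩
  · exact (hL ▸ (show e₂ ∈ L by simp [L, hy₂, h]) : e₂ ∈ (∅ : Set E))
  · by_cases h : e' = e
    · exact .inl h
    · have : e' ∈ I \ {e} := ⟨he', h⟩
      rw [he₂] at this
      exact .inr this

/-! ### Deletion, contraction and induced subgraphs -/

def edgeRestrict (G : Multigraph V E) (F : Set E) : Multigraph V F :=
  ⟨fun e => G.ends e⟩

abbrev delete (G : Multigraph V E) (e : E) : Multigraph V ({e}ᶜ : Set E) :=
  G.edgeRestrict {e}ᶜ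

def map {W : Type} (G : Multigraph V E) (φ : V → W) : Multigraph W E :=
  ⟨fun e => (G.ends e).map φ⟩

def induce (G : Multigraph V E) (W : Set V) : Multigraph W (G.ends ⁻¹' W.sym2) :=
  ⟨fun e => (G.ends e).attachWith fun _ hv => Set.mem_sym2_iff_subset.1 e.2 hv⟩

open Classical in
noncomputable def collapse {y : V} (x : V) (hx : x ≠ y) (v : V) : ({y}ᶜ : Set V) :=
  if h : v = y then ⟨x, hx⟩ else ⟨v, h⟩

noncomputable def contract (G : Multigraph V E) (e : E) {x y : V} (hxy : x ≠ y) :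
    Multigraph ({y}ᶜ : Set V) ({e}ᶜ : Set E) :=
  (G.delete e).map (collapse x hxy)

section Collapse

variable {x y : V} (hxy : x ≠ y)

theorem collapse_of_ne {v : V} (hv : v ≠ y) : collapse x hxy v = ⟨v, hv⟩ :=
  dif_neg hv

theorem collapse_self : collapse x hxy y = ⟨x, hxy⟩ :=
  dif_pos rfl

theorem collapse_surjective : Function.Surjective (collapse x hxy) :=
  fun v => ⟨v, collapse_of_ne hxy v.2⟩

theorem eq_of_collapse_eq {u v : V} (hvx : v ≠ x) (hvy : v ≠ y)
    (h : collapse x hxy u = collapse x hxy v) : u = v := by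
  rw [collapse_of_ne hxy hvy] at h
  by_cases huy : u = y
  · rw [huy, collapse_self] at h
    exact absurd (congrArg Subtype.val h).symm hvx
  · rw [collapse_of_ne hxy huy] at h
    exact congrArg Subtype.val h

theorem contract_ends {e : E} (e' : ({e}ᶜ : Set E)) :
    (G.contract e hxy).ends e' = (G.ends e').map (collapse x hxy) := rfl

end Collapse

/-- Lifting a walk from `x` to `y` avoiding `e` along the map sending `y` to `y₂` shows that
`e₂` is not a bridge after the contraction. -/
theorem contract_not_isBridge {e : E} {x y : V} (he : G.ends e = s(x, y)) (hxy : x ≠ y)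
    (hnb : ¬G.IsBridge e) {e₂ : E} {y₂ : V} (he₂e : e₂ ≠ e) (he₂ : G.ends e₂ = s(y, y₂))
    (hy₂ : y₂ ≠ y) (hy : ∀ e', y ∈ G.ends e' → e' = e ∨ e' = e₂) :
    ¬(G.contract e hxy).IsBridge ⟨e₂, he₂e⟩ := by
  have hends : (G.contract e hxy).ends ⟨e₂, he₂e⟩ = s(⟨x, hxy⟩, ⟨y₂, hy₂⟩) := by
    rw [contract_ends, he₂, Sym2.map_mk, collapse_self, collapse_of_ne hxy hy₂]
  refine not_isBridge_of_reachOff hends ?_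
  have hwalk : ReflTransGen (G.AdjOff {e}) x y := by
    by_contra hr
    exact hnb ⟨x, y, he, hr⟩
  have hstep (a b : V) (hab : G.AdjOff {e} a b) : ReflTransGen
      ((G.contract e hxy).AdjOff {⟨e₂, he₂e⟩}) (collapse y₂ hy₂ a) (collapse y₂ hy₂ b) := by
    obtain ⟨e', he', hab⟩ := hab
    by_cases h₂ : e' = e₂
    · rw [h₂, he₂, Sym2.eq_iff] at hab
      rcases hab with ⟨rfl, rfl⟩ | ⟨rfl, rfl⟩ <;>
        simp only [collapse_self, collapse_of_ne hy₂ hy₂] <;> exact .refl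
    · have hay : a ≠ y := fun hay => (hy e' (by simp [hab, hay])).elim he' h₂
      have hby : b ≠ y := fun hby => (hy e' (by simp [hab, hby])).elim he' h₂
      refine .single ⟨⟨e', he'⟩, fun h => h₂ (congrArg Subtype.val h), ?_⟩
      rw [contract_ends, hab, Sym2.map_mk, collapse_of_ne hxy hay, collapse_of_ne hxy hby,
        collapse_of_ne hy₂ hay, collapse_of_ne hy₂ hby]
  have := ReflTransGen.lift' _ hstep _ _ hwalk
  rwa [Function.onFun, collapse_of_ne hy₂ hxy, collapse_self] at this

theorem induce_ends_map_val {W : Set V} (e : G.ends ⁻¹' W.sym2) :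
    ((G.induce W).ends e).map Subtype.val = G.ends e :=
  Sym2.attachWith_map_subtypeVal _

theorem induce_adj {W : Set V} {e : E} {a b : V} (he : G.ends e = s(a, b)) (ha : a ∈ W)
    (hb : b ∈ W) : (G.induce W).Adj ⟨a, ha⟩ ⟨b, hb⟩ :=
  ⟨⟨e, by simp [he, ha, hb]⟩, Sym2.map.injective Subtype.val_injective
    (by rw [induce_ends_map_val, he, Sym2.map_mk])⟩

theorem ncard_setOf_subtype {F : Set E} (P : E → Prop) :
    {e : F | P e}.ncard = {e | e ∈ F ∧ P e}.ncard := by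
  rw [show {e : F | P e} = {e : F | ↑e ∈ {e | P e}} from rfl, Set.ncard_subtype]
  congr 1
  ext
  simp [and_comm]

theorem degree_edgeRestrict (F : Set E) (v : V) :
    (G.edgeRestrict F).degree v = G.degIn F v := by
  simp only [degree, degIn, Set.sep_univ]
  exact congrArg₂ (· + ·) (ncard_setOf_subtype (v ∈ G.ends ·))
    (ncard_setOf_subtype (G.ends · = s(v, v)))

theorem degree_map {W : Type} {φ : V → W} {v : V}
    (hφ : ∀ e, ∀ u ∈ G.ends e, φ u = φ v → u = v) : (G.map φ).degree (φ v) = G.degree v := by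
  simp only [degree, degIn, Set.sep_univ]
  congr 2 <;> ext e <;> simp only [Set.mem_ofPred_eq, map]
  · rw [Sym2.mem_map]
    exact ⟨fun ⟨u, hu, h⟩ => hφ e u hu h ▸ hu, fun h => ⟨v, h, rfl⟩⟩
  · obtain ⟨a, b, hab⟩ := G.exists_ends_eq e
    have ha := hφ e a (by simp [hab])
    have hb := hφ e b (by simp [hab])
    rw [hab, Sym2.map_mk]
    simp only [Sym2.eq_iff, or_self]
    exact ⟨fun ⟨h1, h2⟩ => ⟨ha h1, hb h2⟩, fun ⟨h1, h2⟩ => ⟨h1 ▸ rfl, h2 ▸ rfl⟩⟩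

theorem degree_induce {W : Set V} {v : V} (hv : v ∈ W) :
    (G.induce W).degree ⟨v, hv⟩ = G.degIn (G.ends ⁻¹' W.sym2) v := by
  have hmem (e : G.ends ⁻¹' W.sym2) : (⟨v, hv⟩ : W) ∈ (G.induce W).ends e ↔ v ∈ G.ends e := by
    rw [← induce_ends_map_val e, Sym2.mem_map]
    exact ⟨fun h => ⟨_, h, rfl⟩, fun ⟨a, ha, h⟩ => (Subtype.ext h : a = ⟨v, hv⟩) ▸ ha⟩
  have hloop (e : G.ends ⁻¹' W.sym2) :
      (G.induce W).ends e = s(⟨v, hv⟩, ⟨v, hv⟩) ↔ G.ends e = s(v, v) := by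
    rw [← (Sym2.map.injective Subtype.val_injective).eq_iff, induce_ends_map_val, Sym2.map_mk]
  simp only [degree, degIn, Set.sep_univ, hmem, hloop]
  exact congrArg₂ (· + ·) (ncard_setOf_subtype (v ∈ G.ends ·))
    (ncard_setOf_subtype (G.ends · = s(v, v)))

theorem Connected.delete (h : G.Connected) {e : E} (hnb : ¬G.IsBridge e) :
    (G.delete e).Connected :=
  ⟨h.1, fun u v => ReflTransGen.mono (fun _ _ ⟨e', he', hends⟩ => ⟨⟨e', he'⟩, hends⟩) _ _
    (reachOff_of_not_isBridge hnb (h.2 u v))⟩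

theorem Connected.map {W : Type} {φ : V → W} (h : G.Connected) (hφ : Function.Surjective φ) :
    (G.map φ).Connected := by
  refine ⟨h.1.map φ, fun u v => ?_⟩
  obtain ⟨u, rfl⟩ := hφ u
  obtain ⟨v, rfl⟩ := hφ v
  exact ReflTransGen.lift φ (fun _ _ ⟨e, he⟩ => ⟨e, by simp [Multigraph.map, he]⟩) _ _ (h.2 u v)

namespace Aut

def edgeRestrict (f : G.Aut) (F : Set E) (hF : ∀ e, f.toE e ∈ F ↔ e ∈ F) :
    (G.edgeRestrict F).Aut :=
  ⟨f.toV, f.toE.subtypePerm hF, fun e => f.ends_map e⟩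

def map {W : Type} {φ : V → W} (f : G.Aut) (σ : Equiv.Perm W)
    (hσ : ∀ v, φ (f.toV v) = σ (φ v)) : (G.map φ).Aut :=
  ⟨σ, f.toE, fun e => by
    simp only [Multigraph.map, f.ends_map, Sym2.map_map]
    exact congrArg (Sym2.map · _) (funext hσ)⟩

def induce (f : G.Aut) (W : Set V) (hW : ∀ v, f.toV v ∈ W ↔ v ∈ W) : (G.induce W).Aut :=
  ⟨f.toV.subtypePerm hW, f.toE.subtypePerm fun e => by
    obtain ⟨a, b, hab⟩ := G.exists_ends_eq e
    simp [f.ends_map, hab, hW],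
   fun e => Sym2.map.injective Subtype.val_injective <| by
    rw [Sym2.map_map, show Subtype.val ∘ f.toV.subtypePerm hW = f.toV ∘ Subtype.val from rfl,
      ← Sym2.map_map, induce_ends_map_val, induce_ends_map_val]
    exact f.ends_map e⟩

end Aut

/-! ### The two sides of an edge -/

def side (G : Multigraph V E) (e : E) (x : V) : Set V :=
  {v | ReflTransGen (G.AdjOff {e}) x v}

section Side

variable {e : E} {x : V}

theorem mem_side_self : x ∈ G.side e x := ReflTransGen.refl

theorem mem_side_iff_of_adjOff {u v : V} (h : G.AdjOff {e} u v) :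
    u ∈ G.side e x ↔ v ∈ G.side e x :=
  ⟨fun hu => hu.tail h, fun hv => hv.tail (symm_of _ h)⟩

theorem Aut.apply_mem_side_iff (f : G.Aut) (hfx : f.toV x = x) (hfe : f.toE e = e) {v : V} :
    f.toV v ∈ G.side e x ↔ v ∈ G.side e x := by
  have hfx' : f.toV.symm x = x := f.toV.symm_apply_eq.2 hfx.symm
  have hfe' : f.toE.symm e = e := f.toE.symm_apply_eq.2 hfe.symm
  constructor
  · intro h
    simpa [side, hfx', hfe'] using f⁻¹.reachOff h
  · intro h
    simpa [side, hfx, hfe] using f.reachOff h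

theorem ends_mem_sym2_side_or {e' : E} (he' : e' ≠ e) :
    G.ends e' ∈ (G.side e x).sym2 ∨ G.ends e' ∈ (G.side e x)ᶜ.sym2 := by
  obtain ⟨a, b, hab⟩ := G.exists_ends_eq e'
  have := mem_side_iff_of_adjOff (x := x) ⟨e', he', hab⟩
  rw [hab, Set.mk_mem_sym2_iff, Set.mk_mem_sym2_iff, Set.mem_compl_iff, Set.mem_compl_iff, this]
  tauto

theorem ends_mem_sym2_compl_side_or {e' : E} (he' : e' ≠ e) :
    G.ends e' ∈ (G.side e x)ᶜ.sym2 ∨ G.ends e' ∈ (G.side e x)ᶜᶜ.sym2 := by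
  rw [compl_compl]
  exact (ends_mem_sym2_side_or he').symm

theorem mem_side_or_mem_side (hconn : G.Connected) {y : V} (he : G.ends e = s(x, y)) (v : V) :
    v ∈ G.side e x ∨ v ∈ G.side e y := by
  have hv := hconn.2 x v
  induction hv with
  | refl => exact .inl mem_side_self
  | tail _ hbc ih =>
    obtain ⟨e', he'⟩ := hbc
    by_cases h : e' = e
    · rw [h, he, Sym2.eq_iff] at he'
      rcases he' with ⟨-, rfl⟩ | ⟨rfl, -⟩
      exacts [.inr mem_side_self, .inl mem_side_self]
    · have hstep {u : V} := mem_side_iff_of_adjOff (G := G) (x := u) ⟨e', h, he'⟩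
      exact ih.imp hstep.1 hstep.1

theorem mem_side_or_mem_side_of_ne (hconn : G.Connected) {b b' : E} (hb : x ∈ G.ends b)
    (hb' : x ∈ G.ends b') (hne : b ≠ b') (v : V) : v ∈ G.side b x ∨ v ∈ G.side b' x := by
  have hv := hconn.2 x v
  induction hv with
  | refl => exact .inl mem_side_self
  | @tail c₀ c _ hstep ih =>
    obtain ⟨e', he'⟩ := hstep
    have hc : c ∈ G.ends e' := by simp [he']
    by_cases h : e' = b
    · exact .inr (reachOff_of_mem_ends hne hb (h ▸ hc))
    by_cases h' : e' = b'
    · exact .inl (reachOff_of_mem_ends (Ne.symm hne) hb' (h' ▸ hc))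
    exact ih.imp (mem_side_iff_of_adjOff ⟨e', h, he'⟩).1 (mem_side_iff_of_adjOff ⟨e', h', he'⟩).1

theorem compl_side_eq (hconn : G.Connected) {y : V} (he : G.ends e = s(x, y))
    (hy : y ∉ G.side e x) : (G.side e x)ᶜ = G.side e y := by
  ext v
  exact ⟨(mem_side_or_mem_side hconn he v).resolve_left,
    fun hv hvx => hy (ReflTransGen.trans hvx (symm_of _ hv))⟩

theorem IsBridge.exists_ends_eq (hbr : G.IsBridge e) (hx : x ∈ G.ends e) :
    ∃ y, G.ends e = s(x, y) ∧ y ∉ G.side e x := by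
  obtain ⟨u, v, huv, hr⟩ := hbr
  rw [huv, Sym2.mem_iff] at hx
  rcases hx with rfl | rfl
  · exact ⟨v, huv, hr⟩
  · exact ⟨u, huv.trans Sym2.eq_swap, fun h => hr (symm_of _ h)⟩

theorem eq_of_mem_ends_of_mem_side (hbr : G.IsBridge e) (hx : x ∈ G.ends e) {v : V}
    (hv : v ∈ G.ends e) (hvx : v ∈ G.side e x) : v = x := by
  obtain ⟨y, he, hy⟩ := hbr.exists_ends_eq hx
  rw [he, Sym2.mem_iff] at hv
  exact hv.resolve_right fun h => hy (h ▸ hvx)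

theorem connected_induce_side : (G.induce (G.side e x)).Connected := by
  have hroot (v : V) (hv : ReflTransGen (G.AdjOff {e}) x v) :
      ReflTransGen (G.induce (G.side e x)).Adj ⟨x, mem_side_self⟩ ⟨v, hv⟩ := by
    induction hv with
    | refl => exact .refl
    | tail hb hbc ih =>
      obtain ⟨e', he', hends⟩ := hbc
      exact ih.tail (induce_adj hends hb (hb.tail ⟨e', he', hends⟩))
  exact ⟨⟨⟨x, mem_side_self⟩⟩, fun u v => (symm_of _ (hroot u u.2)).trans (hroot v v.2)⟩

theorem degree_induce_of_separates {W : Set V}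
    (hW : ∀ e', e' ≠ e → G.ends e' ∈ W.sym2 ∨ G.ends e' ∈ Wᶜ.sym2)
    (hcross : G.ends e ∉ W.sym2) {v : V} (hv : v ∈ W) :
    (G.induce W).degree ⟨v, hv⟩ = G.degIn {e}ᶜ v := by
  rw [degree_induce, degIn_congr]
  intro e' he'
  simp only [Set.mem_preimage, Set.mem_compl_singleton_iff]
  refine ⟨fun h hee => hcross (hee ▸ h), fun hne => (hW e' hne).resolve_right fun h => ?_⟩
  exact Set.mem_sym2_iff_subset.1 h he' hv

theorem card_edges_induce_add_card_edges_induce_compl [Finite E] {W : Set V}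
    (hW : ∀ e', e' ≠ e → G.ends e' ∈ W.sym2 ∨ G.ends e' ∈ Wᶜ.sym2)
    (hcross : G.ends e ∉ W.sym2) (hcross' : G.ends e ∉ Wᶜ.sym2) :
    Nat.card (G.ends ⁻¹' W.sym2) + Nat.card (G.ends ⁻¹' Wᶜ.sym2) + 1 = Nat.card E := by
  have hunion : G.ends ⁻¹' W.sym2 ∪ G.ends ⁻¹' Wᶜ.sym2 = {e}ᶜ := by
    ext e'
    simp only [Set.mem_union, Set.mem_preimage, Set.mem_compl_singleton_iff]
    refine ⟨?_, hW e'⟩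
    rintro (h | h) rfl
    exacts [hcross h, hcross' h]
  have hdisj : Disjoint (G.ends ⁻¹' W.sym2) (G.ends ⁻¹' Wᶜ.sym2) := by
    refine Set.disjoint_left.2 fun e' h h' => ?_
    obtain ⟨a, b, hab⟩ := G.exists_ends_eq e'
    simp only [Set.mem_preimage, hab, Set.mk_mem_sym2_iff] at h h'
    exact h'.1 h.1
  rw [Nat.card_coe_set_eq, Nat.card_coe_set_eq, ← Set.ncard_union_eq hdisj, hunion,
    ← Nat.card_coe_set_eq, Nat.card_compl_singleton_add_one]

end Side

/-! ### Connected graphs that are leafless away from a root -/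

structure IsRootedLeafless (G : Multigraph V E) (x : V) (g : ℕ) : Prop where
  connected : G.Connected
  two_le_degree : ∀ v, v ≠ x → 2 ≤ G.degree v
  card_add_betti : Nat.card E + 1 = Nat.card V + g

noncomputable def betti (_ : Multigraph V E) : ℕ := Nat.card E + 1 - Nat.card V

section RootedLeafless

variable [Finite V] [Finite E] {x y : V} {g : ℕ} {e : E}

theorem isRootedLeafless_betti (hc : G.Connected) (hd : ∀ v, v ≠ x → 2 ≤ G.degree v) :
    G.IsRootedLeafless x G.betti :=
  ⟨hc, hd, by have := degree_add_two_mul_card_le hd; unfold betti; omega⟩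

theorem IsRootedLeafless.degree_le (h : G.IsRootedLeafless x g) : G.degree x ≤ 2 * g := by
  have := degree_add_two_mul_card_le h.two_le_degree
  have := h.card_add_betti
  omega

theorem IsRootedLeafless.delete (h : G.IsRootedLeafless x g) (he : G.ends e = s(x, y))
    (hnb : ¬G.IsBridge e) (hy : y = x ∨ 3 ≤ G.degree y) :
    (G.delete e).IsRootedLeafless x (g - 1) where
  connected := h.connected.delete hnb
  two_le_degree v hvx := by
    rw [degree_edgeRestrict]
    by_cases hve : v ∈ G.ends e
    · obtain rfl : v = y := by simpa [he, hvx] using hve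
      have := degIn_compl_singleton_add_one hve (by simpa [he, Sym2.eq_iff] using hvx.symm)
      have := hy.resolve_left hvx
      omega
    · rw [degIn_compl_singleton_of_notMem hve]
      exact h.two_le_degree v hvx
  card_add_betti := by
    have := h.degree_le
    have := one_le_degree (show x ∈ G.ends e by simp [he])
    have := Nat.card_compl_singleton_add_one e
    have := h.card_add_betti
    omega

theorem IsRootedLeafless.contract (h : G.IsRootedLeafless x g) (he : G.ends e = s(x, y))
    (hxy : x ≠ y) (hnb : ¬G.IsBridge e) :
    (G.contract e hxy).IsRootedLeafless ⟨x, hxy⟩ g where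
  connected := (h.connected.delete hnb).map (collapse_surjective hxy)
  two_le_degree := by
    rintro ⟨v, hvy⟩ hv
    have hvx : v ≠ x := fun h => hv (Subtype.ext h)
    have hvy : v ≠ y := hvy
    rw [← collapse_of_ne hxy hvy, Multigraph.contract,
      degree_map fun _ _ _ => eq_of_collapse_eq hxy hvx hvy, degree_edgeRestrict,
      degIn_compl_singleton_of_notMem (by simp [he, hvx, hvy])]
    exact h.two_le_degree v hvx
  card_add_betti := by
    have := Nat.card_compl_singleton_add_one e
    have := Nat.card_compl_singleton_add_one y
    have := h.card_add_betti
    omega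

theorem IsRootedLeafless.induce_side (h : G.IsRootedLeafless x g) (he : G.ends e = s(x, y))
    (hy : y ∉ G.side e x) :
    (G.induce (G.side e x)).IsRootedLeafless ⟨x, mem_side_self⟩ (G.induce (G.side e x)).betti := by
  refine isRootedLeafless_betti connected_induce_side fun ⟨v, hv⟩ hvx => ?_
  have hvx : v ≠ x := fun h => hvx (Subtype.ext h)
  have hvy : v ≠ y := fun h => hy (h ▸ hv)
  rw [degree_induce_of_separates (fun _ => ends_mem_sym2_side_or) (by simp [he, hy]),
    degIn_compl_singleton_of_notMem (by simp [he, hvx, hvy])]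
  exact h.two_le_degree v hvx

theorem IsRootedLeafless.induce_compl_side (h : G.IsRootedLeafless x g)
    (he : G.ends e = s(x, y)) (hy : y ∉ G.side e x) :
    (G.induce (G.side e x)ᶜ).IsRootedLeafless ⟨y, hy⟩ (G.induce (G.side e x)ᶜ).betti ∧
      1 ≤ (G.induce (G.side e x)ᶜ).betti := by
  have hcross : G.ends e ∉ (G.side e x)ᶜ.sym2 := by simp [he, mem_side_self]
  have hc : (G.induce (G.side e x)ᶜ).Connected := by
    rw [compl_side_eq h.connected he hy]
    exact connected_induce_side
  have hxy : x ≠ y := fun h => hy (h ▸ mem_side_self)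
  have h' := isRootedLeafless_betti (x := (⟨y, hy⟩ : ↥(G.side e x)ᶜ)) hc fun ⟨v, hv⟩ hvy => by
    have hvy : v ≠ y := fun h => hvy (Subtype.ext h)
    have hvx : v ≠ x := fun h => hv (h ▸ mem_side_self)
    rw [degree_induce_of_separates (fun _ => ends_mem_sym2_compl_side_or) hcross,
      degIn_compl_singleton_of_notMem (by simp [he, hvx, hvy])]
    exact h.two_le_degree v hvx
  refine ⟨h', ?_⟩
  have hroot := degIn_compl_singleton_add_one (show y ∈ G.ends e by simp [he])
    (by simpa [he, Sym2.eq_iff] using hxy)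
  rw [← degree_induce_of_separates (fun _ => ends_mem_sym2_compl_side_or) hcross hy] at hroot
  have := h'.degree_le
  have := h.two_le_degree y (Ne.symm hxy)
  omega

theorem IsRootedLeafless.betti_add_betti (h : G.IsRootedLeafless x g) (he : G.ends e = s(x, y))
    (hy : y ∉ G.side e x) :
    (G.induce (G.side e x)).betti + (G.induce (G.side e x)ᶜ).betti = g := by
  have h₁ := (h.induce_side he hy).card_add_betti
  have h₂ := (h.induce_compl_side he hy).1.card_add_betti
  have hE := card_edges_induce_add_card_edges_induce_compl (fun _ => ends_mem_sym2_side_or)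
    (show G.ends e ∉ (G.side e x).sym2 by simp [he, hy])
    (show G.ends e ∉ (G.side e x)ᶜ.sym2 by simp [he, mem_side_self])
  have hV : Nat.card (G.side e x) + Nat.card ↥(G.side e x)ᶜ = Nat.card V := by
    simp only [Nat.card_coe_set_eq]
    exact Set.ncard_add_ncard_compl _
  have := h.card_add_betti
  omega

end RootedLeafless

/-! ### Branches at the root -/

section Branches

variable {x : V} {B : Finset E}

theorem ncard_le_ncard_biInter_side_add :
    Nat.card V ≤ (⋂ b ∈ B, G.side b x).ncard + ∑ b ∈ B, (G.side b x)ᶜ.ncard := by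
  calc Nat.card V = (Set.univ : Set V).ncard := Set.ncard_univ V |>.symm
    _ = ((⋂ b ∈ B, G.side b x) ∪ ⋃ b ∈ B, (G.side b x)ᶜ).ncard := by
      rw [← Set.compl_iInter₂, Set.union_compl_self]
    _ ≤ (⋂ b ∈ B, G.side b x).ncard + (⋃ b ∈ B, (G.side b x)ᶜ).ncard := Set.ncard_union_le _ _
    _ ≤ _ := by gcongr; exact B.set_ncard_biUnion_le _

theorem ncard_edges_biInter_side_add_le [Finite E] (hconn : G.Connected)
    (hB : ∀ b ∈ B, x ∈ G.ends b ∧ G.IsBridge b) :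
    (G.ends ⁻¹' (⋂ b ∈ B, G.side b x).sym2).ncard + B.card +
      ∑ b ∈ B, (G.ends ⁻¹' (G.side b x)ᶜ.sym2).ncard ≤ Nat.card E := by
  set W := ⋂ b ∈ B, G.side b x
  have hWB : Disjoint (G.ends ⁻¹' W.sym2) (B : Set E) := by
    refine Set.disjoint_left.2 fun b hbW hb => ?_
    obtain ⟨y, he, hy⟩ := (hB b hb).2.exists_ends_eq (hB b hb).1
    rw [Set.mem_preimage, he, Set.mk_mem_sym2_iff] at hbW
    exact hy (Set.mem_iInter₂.1 hbW.2 b hb)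
  have hfar : Disjoint (G.ends ⁻¹' W.sym2 ∪ B) (⋃ b ∈ B, G.ends ⁻¹' (G.side b x)ᶜ.sym2) := by
    refine Set.disjoint_left.2 fun e' he' hfar => ?_
    obtain ⟨b, hb, hfar⟩ := Set.mem_iUnion₂.1 hfar
    obtain ⟨a, a', ha⟩ := G.exists_ends_eq e'
    rw [Set.mem_preimage, ha, Set.mk_mem_sym2_iff] at hfar
    rcases he' with hW | hB'
    · rw [Set.mem_preimage, ha, Set.mk_mem_sym2_iff] at hW
      exact hfar.1 (Set.mem_iInter₂.1 hW.1 b hb)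
    · have hx := (hB e' hB').1
      rw [ha, Sym2.mem_iff] at hx
      rcases hx with rfl | rfl
      exacts [hfar.1 mem_side_self, hfar.2 mem_side_self]
  have hpair : (B : Set E).PairwiseDisjoint fun b => G.ends ⁻¹' (G.side b x)ᶜ.sym2 := by
    refine fun b hb b' hb' hne => Set.disjoint_left.2 fun e' h h' => ?_
    obtain ⟨a, a', ha⟩ := G.exists_ends_eq e'
    simp only [Set.mem_preimage, ha, Set.mk_mem_sym2_iff, Set.mem_compl_iff] at h h'
    rcases mem_side_or_mem_side_of_ne hconn (hB b hb).1 (hB b' hb').1 hne a with h'' | h''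
    exacts [h.1 h'', h'.1 h'']
  rw [← Set.ncard_coe_finset B, ← Set.ncard_union_eq hWB, ← finsum_mem_coe_finset,
    ← B.finite_toSet.ncard_biUnion (fun _ _ => Set.toFinite _) hpair, Finset.set_biUnion_coe,
    ← Set.ncard_union_eq hfar]
  exact Set.ncard_le_card _

variable [Finite V] [Finite E] {g : ℕ}

theorem IsRootedLeafless.ncard_biInter_side_le (h : G.IsRootedLeafless x g)
    (hB : ∀ b ∈ B, x ∈ G.ends b ∧ G.IsBridge b) :
    (⋂ b ∈ B, G.side b x).ncard ≤ (G.ends ⁻¹' (⋂ b ∈ B, G.side b x).sym2).ncard + 1 := by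
  set W := ⋂ b ∈ B, G.side b x
  have hxW : x ∈ W := Set.mem_iInter₂.2 fun b _ => mem_side_self
  have hinside {v : V} (hv : v ∈ W) (hvx : v ≠ x) {e' : E} (he' : v ∈ G.ends e') :
      G.ends e' ∈ W.sym2 := by
    refine Set.mem_sym2_iff_subset.2 fun w hw => Set.mem_iInter₂.2 fun b hb => ?_
    have hvb := Set.mem_iInter₂.1 hv b hb
    have hne : e' ≠ b := by
      rintro rfl
      exact hvx (eq_of_mem_ends_of_mem_side (hB e' hb).2 (hB e' hb).1 he' hvb)
    rcases ends_mem_sym2_side_or (x := x) hne with h₁ | h₁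
    · exact Set.mem_sym2_iff_subset.1 h₁ hw
    · exact absurd hvb (Set.mem_sym2_iff_subset.1 h₁ he')
  have := degree_add_two_mul_card_le (G := G.induce W) (x := ⟨x, hxW⟩) fun ⟨v, hv⟩ hvx => by
    have hvx : v ≠ x := fun h => hvx (Subtype.ext h)
    rw [degree_induce, degIn_congr (F' := Set.univ) fun e' he' => by simp [hinside hv hvx he']]
    exact h.two_le_degree v hvx
  rw [Nat.card_coe_set_eq, Nat.card_coe_set_eq] at this
  omega

theorem IsRootedLeafless.sum_betti_le (h : G.IsRootedLeafless x g)
    (hB : ∀ b ∈ B, x ∈ G.ends b ∧ G.IsBridge b) :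
    ∑ b ∈ B, (G.induce (G.side b x)ᶜ).betti ≤ g := by
  have hE := ncard_edges_biInter_side_add_le h.connected hB
  have hW := h.ncard_biInter_side_le hB
  have hV := ncard_le_ncard_biInter_side_add (G := G) (x := x) (B := B)
  have hb : ∑ b ∈ B, ((G.ends ⁻¹' (G.side b x)ᶜ.sym2).ncard + 1) =
      ∑ b ∈ B, ((G.side b x)ᶜ.ncard + (G.induce (G.side b x)ᶜ).betti) :=
    Finset.sum_congr rfl fun b hb => by
      obtain ⟨y, he, hy⟩ := (hB b hb).2.exists_ends_eq (hB b hb).1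
      simpa only [Nat.card_coe_set_eq] using (h.induce_compl_side he hy).1.card_add_betti
  rw [Finset.sum_add_distrib, Finset.sum_add_distrib, Finset.sum_const, smul_eq_mul,
    mul_one] at hb
  have := h.card_add_betti
  omega

end Branches

/-! ### Stabilizers -/

section Stabilizers

theorem card_stabilizer_inf_le_delete [Finite V] [Finite E] (x : V) (e : E) :
    Nat.card ↥(stabilizer G.Aut x ⊓ stabilizer G.Aut e) ≤
      Nat.card (stabilizer (G.delete e).Aut x) := by
  refine Nat.card_le_card_of_injective (fun f => ⟨f.1.edgeRestrict {e}ᶜ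
    fun _ => f.1.toE.injective.ne_iff' f.2.2, f.2.1⟩) fun f f' hff' => ?_
  ext1
  refine Aut.ext (congrArg (fun f => f.1.toV) hff') (Equiv.ext fun e' => ?_)
  by_cases he' : e' = e
  · rw [he']
    exact f.2.2.trans f'.2.2.symm
  · exact congrArg (fun f => (f.1.toE ⟨e', he'⟩ : E)) hff'

variable {x y : V} {e : E}

theorem card_stabilizer_inf_le_contract [Finite V] [Finite E] (he : G.ends e = s(x, y))
    (hxy : x ≠ y) {e₂ : E} (he₂e : e₂ ≠ e) (hye₂ : y ∈ G.ends e₂)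
    (hy : ∀ e', y ∈ G.ends e' → e' = e ∨ e' = e₂) :
    Nat.card ↥(stabilizer G.Aut x ⊓ stabilizer G.Aut e) ≤
      Nat.card ↥(stabilizer (G.contract e hxy).Aut (⟨x, hxy⟩ : ({y}ᶜ : Set V)) ⊓
        stabilizer (G.contract e hxy).Aut (⟨e₂, he₂e⟩ : ({e}ᶜ : Set E))) := by
  have hfy (f : ↥(stabilizer G.Aut x ⊓ stabilizer G.Aut e)) : f.1.toV y = y :=
    f.1.apply_eq_of_ends_eq he f.2.1 f.2.2
  have hfe₂ (f : ↥(stabilizer G.Aut x ⊓ stabilizer G.Aut e)) : f.1.toE e₂ = e₂ :=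
    (hy _ (hfy f ▸ f.1.mem_ends_iff.2 hye₂)).resolve_left
      fun h => he₂e (f.1.toE.injective (h.trans f.2.2.symm))
  have hσ (f : ↥(stabilizer G.Aut x ⊓ stabilizer G.Aut e)) (v : V) :
      collapse x hxy (f.1.toV v) =
        f.1.toV.subtypePerm (fun _ => f.1.toV.injective.ne_iff' (hfy f)) (collapse x hxy v) := by
    by_cases hvy : v = y
    · rw [hvy, hfy f, collapse_self]
      exact Subtype.ext f.2.1.symm
    · rw [collapse_of_ne hxy hvy, collapse_of_ne hxy (f.1.toV.injective.ne_iff' (hfy f) |>.2 hvy)]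
      rfl
  refine Nat.card_le_card_of_injective (fun f =>
    ⟨((f.1.edgeRestrict {e}ᶜ fun _ => f.1.toE.injective.ne_iff' f.2.2).map _ (hσ f)),
      Subtype.ext f.2.1, Subtype.ext (hfe₂ f)⟩) fun f f' hff' => ?_
  ext1
  refine Aut.ext (Equiv.ext fun v => ?_) (Equiv.ext fun e' => ?_)
  · by_cases hvy : v = y
    · rw [hvy, hfy f, hfy f']
    · exact congrArg (fun f => (f.1.toV ⟨v, hvy⟩ : V)) hff'
  · by_cases he' : e' = e
    · rw [he']
      exact f.2.2.trans f'.2.2.symm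
    · exact congrArg (fun f => (f.1.toE ⟨e', he'⟩ : E)) hff'

theorem card_stabilizer_inf_le_mul [Finite V] [Finite E] (he : G.ends e = s(x, y))
    (hy : y ∉ G.side e x) :
    Nat.card ↥(stabilizer G.Aut x ⊓ stabilizer G.Aut e) ≤
      Nat.card (stabilizer (G.induce (G.side e x)).Aut (⟨x, mem_side_self⟩ : G.side e x)) *
      Nat.card (stabilizer (G.induce (G.side e x)ᶜ).Aut (⟨y, hy⟩ : ↥(G.side e x)ᶜ)) := by
  have hW (f : ↥(stabilizer G.Aut x ⊓ stabilizer G.Aut e)) (v : V) :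
      f.1.toV v ∈ G.side e x ↔ v ∈ G.side e x :=
    f.1.apply_mem_side_iff f.2.1 f.2.2
  rw [← Nat.card_prod]
  refine Nat.card_le_card_of_injective (fun f =>
    (⟨f.1.induce _ (hW f), Subtype.ext f.2.1⟩,
      ⟨f.1.induce _ fun v => (hW f v).not, Subtype.ext (f.1.apply_eq_of_ends_eq he f.2.1 f.2.2)⟩))
    fun f f' hff' => ?_
  simp only [Prod.mk.injEq] at hff'
  ext1
  refine Aut.ext (Equiv.ext fun v => ?_) (Equiv.ext fun e' => ?_)
  · by_cases hv : v ∈ G.side e x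
    · exact congrArg (fun f => (f.1.toV ⟨v, hv⟩ : V)) hff'.1
    · exact congrArg (fun f => (f.1.toV ⟨v, hv⟩ : V)) hff'.2
  · by_cases he' : e' = e
    · rw [he']
      exact f.2.2.trans f'.2.2.symm
    rcases ends_mem_sym2_side_or (x := x) he' with h | h
    · exact congrArg (fun f => (f.1.toE ⟨e', h⟩ : E)) hff'.1
    · exact congrArg (fun f => (f.1.toE ⟨e', h⟩ : E)) hff'.2

end Stabilizers

/-! ### The induction -/

def StabilizerBounds (G : Multigraph V E) (x : V) (g : ℕ) : Prop :=
  Nat.card (stabilizer G.Aut x) ≤ 2 ^ g * g.factorial ∧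
    ∀ e, x ∈ G.ends e → ¬G.IsBridge e →
      Nat.card ↥(stabilizer G.Aut x ⊓ stabilizer G.Aut e) ≤ 2 ^ (g - 1) * (g - 1).factorial

def StabilizerBoundsBelow (n : ℕ) : Prop :=
  ∀ ⦃V E : Type⦄ [Finite V] [Finite E] (G : Multigraph V E) (x : V) (g : ℕ),
    Nat.card E < n → G.IsRootedLeafless x g → G.StabilizerBounds x g

section Induction

variable [Finite V] [Finite E] {x : V} {g : ℕ} {e : E}

theorem IsRootedLeafless.card_stabilizer_inf_le_of_isBridge (h : G.IsRootedLeafless x g)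
    (ih : StabilizerBoundsBelow (Nat.card E)) (hx : x ∈ G.ends e) (hbr : G.IsBridge e) :
    Nat.card ↥(stabilizer G.Aut x ⊓ stabilizer G.Aut e) ≤
      2 ^ g * ((G.induce (G.side e x)ᶜ).betti * (g - 1).factorial) := by
  obtain ⟨y, he, hy⟩ := hbr.exists_ends_eq hx
  obtain ⟨hfar, hfar_pos⟩ := h.induce_compl_side he hy
  have hsum := h.betti_add_betti he hy
  have hE := card_edges_induce_add_card_edges_induce_compl (fun _ => ends_mem_sym2_side_or)
    (show G.ends e ∉ (G.side e x).sym2 by simp [he, hy])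
    (show G.ends e ∉ (G.side e x)ᶜ.sym2 by simp [he, mem_side_self])
  set b₁ := (G.induce (G.side e x)).betti
  set b₂ := (G.induce (G.side e x)ᶜ).betti
  calc _ ≤ _ := card_stabilizer_inf_le_mul he hy
    _ ≤ (2 ^ b₁ * b₁.factorial) * (2 ^ b₂ * b₂.factorial) :=
      Nat.mul_le_mul (ih _ _ _ (by omega) (h.induce_side he hy)).1 (ih _ _ _ (by omega) hfar).1
    _ = 2 ^ g * (b₁.factorial * b₂.factorial) := by rw [← hsum, pow_add]; ring
    _ ≤ 2 ^ g * (b₂ * (g - 1).factorial) := by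
      rw [← hsum]
      exact Nat.mul_le_mul_left _ (Nat.factorial_mul_factorial_le_mul_factorial hfar_pos)

theorem IsRootedLeafless.card_stabilizer_inf_le (h : G.IsRootedLeafless x g)
    (ih : StabilizerBoundsBelow (Nat.card E)) (hx : x ∈ G.ends e) (hnb : ¬G.IsBridge e) :
    Nat.card ↥(stabilizer G.Aut x ⊓ stabilizer G.Aut e) ≤ 2 ^ (g - 1) * (g - 1).factorial := by
  obtain ⟨y, he⟩ := Sym2.mem_iff_exists.1 hx
  have hlt : Nat.card ({e}ᶜ : Set E) < Nat.card E := by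
    have := Nat.card_compl_singleton_add_one e
    omega
  by_cases hy : y = x ∨ 3 ≤ G.degree y
  · exact (card_stabilizer_inf_le_delete x e).trans (ih _ x _ hlt (h.delete he hnb hy)).1
  obtain ⟨hyx, hy3⟩ := not_or.1 hy
  have hxy : x ≠ y := Ne.symm hyx
  obtain ⟨e₂, y₂, he₂e, he₂, hy₂, hye⟩ := exists_other_edge_of_degree_eq_two he hxy
    (by have := h.two_le_degree y hyx; omega)
  have hx₂ : (⟨x, hxy⟩ : ({y}ᶜ : Set V)) ∈ (G.contract e hxy).ends ⟨e₂, he₂e⟩ := by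
    rw [contract_ends, he₂, Sym2.map_mk, collapse_self]
    exact Sym2.mem_mk_left _ _
  exact (card_stabilizer_inf_le_contract he hxy he₂e (by simp [he₂]) hye).trans
    ((ih _ _ _ hlt (h.contract he hxy hnb)).2 _ hx₂
      (contract_not_isBridge he hxy hnb he₂e he₂ hy₂ hye))

theorem IsRootedLeafless.card_stabilizer_le_of_not_isBridge (h : G.IsRootedLeafless x g)
    (hnb : ∀ e, x ∈ G.ends e → ¬G.IsBridge e →
      Nat.card ↥(stabilizer G.Aut x ⊓ stabilizer G.Aut e) ≤ 2 ^ (g - 1) * (g - 1).factorial)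
    {e₀ : E} (hx₀ : x ∈ G.ends e₀) (hnb₀ : ¬G.IsBridge e₀) :
    Nat.card (stabilizer G.Aut x) ≤ 2 ^ g * g.factorial := by
  classical
  have := Fintype.ofFinite E
  set s := Finset.univ.filter fun e => x ∈ G.ends e ∧ ¬G.IsBridge e
  have hs : s.card ≤ 2 * g := by
    rw [← Set.ncard_coe_finset]
    refine (Set.ncard_le_ncard fun e he => ?_).trans
      ((ncard_incident_le_degree x).trans h.degree_le)
    exact (Finset.mem_filter.1 he).2.1
  have hg : 1 ≤ g := by
    have := one_le_degree hx₀
    have := h.degree_le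
    omega
  calc Nat.card (stabilizer G.Aut x)
      ≤ ∑ e ∈ s, Nat.card ↥(stabilizer G.Aut x ⊓ stabilizer G.Aut e) :=
        (stabilizer G.Aut x).card_le_sum_card_inf_stabilizer (a := e₀) fun f hf => by
          simp [s, f.mem_ends_of_mem_stabilizer hf hx₀, f.isBridge_iff, hnb₀]
    _ ≤ ∑ e ∈ s, 2 ^ (g - 1) * (g - 1).factorial := Finset.sum_le_sum fun e he => by
        obtain ⟨hx, hnb'⟩ := (Finset.mem_filter.1 he).2
        exact hnb e hx hnb'
    _ ≤ 2 * g * (2 ^ (g - 1) * (g - 1).factorial) := by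
        rw [Finset.sum_const, smul_eq_mul]
        exact Nat.mul_le_mul_right _ hs
    _ = 2 ^ g * g.factorial := by
        obtain ⟨k, rfl⟩ := Nat.exists_eq_add_of_le' hg
        simp only [Nat.add_sub_cancel, Nat.factorial_succ, pow_succ]
        ring

theorem IsRootedLeafless.card_stabilizer_le_of_isBridge (h : G.IsRootedLeafless x g)
    (ih : StabilizerBoundsBelow (Nat.card E)) (hbr : ∀ e, x ∈ G.ends e → G.IsBridge e)
    {e₀ : E} (hx₀ : x ∈ G.ends e₀) : Nat.card (stabilizer G.Aut x) ≤ 2 ^ g * g.factorial := by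
  classical
  have := Fintype.ofFinite E
  set s := Finset.univ.filter fun e => x ∈ G.ends e
  have hs (e : E) (he : e ∈ s) : x ∈ G.ends e := (Finset.mem_filter.1 he).2
  calc Nat.card (stabilizer G.Aut x)
      ≤ ∑ e ∈ s, Nat.card ↥(stabilizer G.Aut x ⊓ stabilizer G.Aut e) :=
        (stabilizer G.Aut x).card_le_sum_card_inf_stabilizer (a := e₀) fun f hf => by
          simp [s, f.mem_ends_of_mem_stabilizer hf hx₀]
    _ ≤ ∑ e ∈ s, 2 ^ g * ((G.induce (G.side e x)ᶜ).betti * (g - 1).factorial) :=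
        Finset.sum_le_sum fun e he =>
          h.card_stabilizer_inf_le_of_isBridge ih (hs e he) (hbr e (hs e he))
    _ = 2 ^ g * ((∑ e ∈ s, (G.induce (G.side e x)ᶜ).betti) * (g - 1).factorial) := by
        rw [← Finset.mul_sum, ← Finset.sum_mul]
    _ ≤ 2 ^ g * (g * (g - 1).factorial) := by
        gcongr
        exact h.sum_betti_le fun e he => ⟨hs e he, hbr e (hs e he)⟩
    _ ≤ 2 ^ g * g.factorial := by
        gcongr
        rcases Nat.eq_zero_or_pos g with rfl | hg
        · simp
        · exact (Nat.mul_factorial_pred hg.ne').le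

theorem IsRootedLeafless.card_stabilizer_le (h : G.IsRootedLeafless x g)
    (ih : StabilizerBoundsBelow (Nat.card E))
    (hnb : ∀ e, x ∈ G.ends e → ¬G.IsBridge e →
      Nat.card ↥(stabilizer G.Aut x ⊓ stabilizer G.Aut e) ≤ 2 ^ (g - 1) * (g - 1).factorial) :
    Nat.card (stabilizer G.Aut x) ≤ 2 ^ g * g.factorial := by
  by_cases hnb₀ : ∃ e₀, x ∈ G.ends e₀ ∧ ¬G.IsBridge e₀
  · obtain ⟨e₀, hx₀, hnb₀⟩ := hnb₀
    exact h.card_stabilizer_le_of_not_isBridge hnb hx₀ hnb₀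
  by_cases hx : ∃ e₀, x ∈ G.ends e₀
  · obtain ⟨e₀, hx₀⟩ := hx
    exact h.card_stabilizer_le_of_isBridge ih (fun e hx => not_not.1 fun hnb => hnb₀ ⟨e, hx, hnb⟩)
      hx₀
  have := subsingleton_aut_of_forall_notMem h.connected fun e hx' => hx ⟨e, hx'⟩
  calc Nat.card (stabilizer G.Aut x) ≤ 1 := Finite.card_le_one_iff_subsingleton.2 inferInstance
    _ ≤ 2 ^ g * g.factorial := Nat.mul_pos (by positivity) (Nat.factorial_pos g)

end Induction

theorem stabilizerBoundsBelow (n : ℕ) : StabilizerBoundsBelow n := by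
  induction n with
  | zero => exact fun _ _ _ _ _ _ _ hn => absurd hn (Nat.not_lt_zero _)
  | succ n ih =>
    intro V E _ _ G x g hn h
    have ih' : StabilizerBoundsBelow (Nat.card E) :=
      fun _ _ _ _ G' x' g' hlt => ih G' x' g' (by omega)
    have hnb := fun e hx hnb => h.card_stabilizer_inf_le ih' (e := e) hx hnb
    exact ⟨h.card_stabilizer_le ih' hnb, hnb⟩

end Multigraph

/-- Let `G` be a connected leafless graph of Betti number `g ≥ 0`
and `x` a vertex of `G`.  Then the number of automorphisms of `G` fixing `x`
is at most `2^g · g!`. -/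
theorem aut_fixing_vertex_card_le {V E : Type} [Fintype V] [Fintype E]
    (G : Multigraph V E) (g : ℕ)
    (hconn : G.Connected) (hleaf : G.Leafless)
    (hbetti : Fintype.card E + 1 = Fintype.card V + g) (x : V) :
    Nat.card {f : G.Aut // f.toV x = x} ≤ 2 ^ g * Nat.factorial g := by
  have h : G.IsRootedLeafless x g :=
    ⟨hconn, fun v _ => hleaf v, by simpa only [Nat.card_eq_fintype_card] using hbetti⟩
  exact (Multigraph.stabilizerBoundsBelow _ G x g (Nat.lt_succ_self _) h).1
end

section
/- Let G be a connected leafless graph with no bridges, of Betti number g ≥ 1, and let x be a vertex of G. Let G ∖ {x} = U_1 ⊔ ⋯ ⊔ U_k be the decomposition into connected components, let G_i be the subgraph U_i ∪ {x} of G (consisting of U_i together with x and all edges between x and U_i as well as loops at x assigned appropriately), and let g_i be the Betti number of G_i. Then g = g_1 + ⋯ + g_k, each g_i ≥ 1, and each G_i is leafless. -/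
/-!
Each edge of `G` has an endpoint in exactly one `U i` or is a loop at `x`, so the edge sets
`E_i` of the `G_i` partition `E`, while the `U_i` partition `V ∖ {x}`; hence
`∑ (#E_i - #U_i) = #E - #V + 1 = g`. A vertex of `U_i` keeps all its edges in `G_i`, and `x`
has at least two edges into `U_i`: connectivity gives one, and since it is not a bridge a walk
around it gives a second. So `G_i` is leafless, and the handshake lemma
`∑ deg = 2 #E_i ≥ 2 (#U_i + 1)` gives `g_i ≥ 1`.
-/

theorem Relation.ReflTransGen.exists_mem_not_mem_of_mem_of_not_mem {α : Type}
    {r : α → α → Prop} {S : Set α} {a b : α} (h : Relation.ReflTransGen r a b) (ha : a ∈ S)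
    (hb : b ∉ S) :
    ∃ c ∈ S, ∃ d ∉ S, r c d := by
  induction h with
  | refl => exact absurd ha hb
  | @tail c d _ hcd ih =>
    by_cases hc : c ∈ S
    · exact ⟨c, hc, d, hb, hcd⟩
    · exact ih hc

open Function in
theorem Set.ncard_eq_sum_ncard_of_existsUnique {α ι : Type} [Finite α] [Fintype ι] {s : Set α}
    {S : ι → Set α} (hsub : ∀ i, S i ⊆ s) (hcover : ∀ a ∈ s, ∃! i, a ∈ S i) :
    s.ncard = ∑ i, (S i).ncard := by
  have hs : s = ⋃ i, S i := by
    refine Set.Subset.antisymm (fun a ha => ?_) (Set.iUnion_subset hsub)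
    obtain ⟨i, hi, -⟩ := hcover a ha
    exact Set.mem_iUnion.mpr ⟨i, hi⟩
  have hdisj : Pairwise (Disjoint on S) := fun i j hij =>
    Set.disjoint_left.mpr fun a hi hj => hij ((hcover a (hsub i hi)).unique hi hj)
  rw [hs, Set.ncard_iUnion_of_finite (fun _ => Set.toFinite _) hdisj, finsum_eq_sum_of_fintype]

theorem Sym2.eq_diag_of_forall_mem_eq {α : Type} {z : Sym2 α} {x : α} (h : ∀ y ∈ z, y = x) :
    z = s(x, x) := by
  induction z using Sym2.inductionOn with
  | _ a b => rw [h a (Sym2.mem_mk_left a b), h b (Sym2.mem_mk_right a b)]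

open Finset in
theorem Sym2.card_filter_mem_add_card_filter_eq_diag {α : Type} [Fintype α] [DecidableEq α]
    (z : Sym2 α) : #{v | v ∈ z} + #{v | z = s(v, v)} = 2 := by
  induction z using Sym2.inductionOn with
  | _ a b =>
    by_cases hab : a = b
    · subst hab
      have hmem : ({v | v ∈ s(a, a)} : Finset α) = {a} := by ext; simp
      have hdiag : ({v | s(a, a) = s(v, v)} : Finset α) = {a} := by ext; simp [eq_comm]
      rw [hmem, hdiag, card_singleton]
    · have hmem : ({v | v ∈ s(a, b)} : Finset α) = {a, b} := by ext; simp
      have hdiag : ({v | s(a, b) = s(v, v)} : Finset α) = ∅ := by ext; grind [Sym2.eq_iff]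
      rw [hmem, hdiag, card_pair hab, card_empty]

namespace Multigraph

variable {V E : Type} (G : Multigraph V E)

open Finset in
theorem sum_degIn [Fintype V] [Finite E] (F : Set E) : ∑ v, G.degIn F v = 2 * F.ncard := by
  classical
  have := Fintype.ofFinite E
  have hdeg : ∀ v, G.degIn F v =
      ∑ e ∈ F.toFinset,
        ((if v ∈ G.ends e then 1 else 0) + if G.ends e = s(v, v) then 1 else 0) := by
    intro v
    rw [degIn, sum_add_distrib, ← card_filter, ← card_filter, Set.ncard_eq_toFinset_card',
      Set.ncard_eq_toFinset_card']
    congr 1 <;> congr 1 <;> ext <;> simp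
  simp_rw [hdeg]
  rw [sum_comm, Set.ncard_eq_toFinset_card', mul_comm, ← smul_eq_mul, ← sum_const]
  refine sum_congr rfl fun e _ => ?_
  rw [sum_add_distrib, ← card_filter, ← card_filter]
  exact Sym2.card_filter_mem_add_card_filter_eq_diag _

theorem ncard_le_ncard_of_two_le_degIn [Fintype V] [Finite E] {S : Set V} {F : Set E}
    (h : ∀ v ∈ S, 2 ≤ G.degIn F v) : S.ncard ≤ F.ncard := by
  classical
  have hS : 2 * S.ncard ≤ ∑ v ∈ S.toFinset, G.degIn F v := by
    rw [Set.ncard_eq_toFinset_card', mul_comm, ← smul_eq_mul, ← Finset.sum_const]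
    exact Finset.sum_le_sum fun v hv => h v (Set.mem_toFinset.mp hv)
  have := (Finset.sum_le_sum_of_subset (f := G.degIn F) (Finset.subset_univ S.toFinset)).trans
    (G.sum_degIn F).le
  omega

theorem degIn_eq_degree {F : Set E} {v : V} (h : ∀ e, v ∈ G.ends e → e ∈ F) :
    G.degIn F v = G.degree v := by
  have hloop : ∀ e, G.ends e = s(v, v) → v ∈ G.ends e := fun e he => he ▸ Sym2.mem_mk_left v v
  simp only [degree, degIn, Set.mem_univ, true_and]
  congr 2 <;> ext e <;> grind

theorem adjOff_empty : G.AdjOff ∅ = G.Adj := by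
  ext u v
  simp [AdjOff, Adj]

theorem reflTransGen_adjOff_of_not_isBridge {e : E} {u v : V} (he : ¬ G.IsBridge e)
    (huv : G.ends e = s(u, v)) : Relation.ReflTransGen (G.AdjOff {e}) u v := by
  by_contra h
  exact he ⟨u, v, huv, h⟩

section OffVertex

variable {G} {x : V} {U : Set V}

theorem mem_of_mem_ends (hclosed : ∀ u ∈ U, ∀ w, G.AdjOffV x u w → w ∈ U) (hx : x ∉ U)
    {e : E} {v w : V} (hv : v ∈ U) (hve : v ∈ G.ends e) (hwe : w ∈ G.ends e) (hw : w ≠ x) :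
    w ∈ U := by
  rcases eq_or_ne v w with rfl | hvw
  · exact hv
  · exact hclosed v hv w
      ⟨ne_of_mem_of_not_mem hv hx, hw, e, (Sym2.mem_and_mem_iff hvw).mp ⟨hve, hwe⟩⟩

theorem exists_edge_of_reflTransGen_adjOff (hclosed : ∀ u ∈ U, ∀ w, G.AdjOffV x u w → w ∈ U)
    (hx : x ∉ U) {F : Set E} {u : V} (hu : u ∈ U) (h : Relation.ReflTransGen (G.AdjOff F) u x) :
    ∃ e ∉ F, ∃ w ∈ U, G.ends e = s(w, x) := by
  obtain ⟨c, hc, d, hd, e, heF, he⟩ := h.exists_mem_not_mem_of_mem_of_not_mem hu hx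
  obtain rfl : d = x := by
    by_contra hdx
    exact hd (mem_of_mem_ends hclosed hx hc (he ▸ Sym2.mem_mk_left c d)
      (he ▸ Sym2.mem_mk_right c d) hdx)
  exact ⟨e, heF, c, hc, he⟩

theorem two_le_ncard_edges_to [Finite E] (hconn : G.Connected)
    (hbridgeless : ∀ e, ¬ G.IsBridge e)
    (hclosed : ∀ u ∈ U, ∀ w, G.AdjOffV x u w → w ∈ U) (hx : x ∉ U) (hU : U.Nonempty) :
    2 ≤ {e | x ∈ G.ends e ∧ ∃ w ∈ U, w ∈ G.ends e}.ncard := by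
  obtain ⟨u, hu⟩ := hU
  obtain ⟨e₁, -, w₁, hw₁, he₁⟩ := exists_edge_of_reflTransGen_adjOff hclosed hx hu
    (G.adjOff_empty ▸ hconn.2 u x)
  obtain ⟨e₂, he₂, w₂, hw₂, he₂'⟩ := exists_edge_of_reflTransGen_adjOff hclosed hx hw₁
    (G.reflTransGen_adjOff_of_not_isBridge (hbridgeless e₁) he₁)
  have hsub : ({e₁, e₂} : Set E) ⊆ {e | x ∈ G.ends e ∧ ∃ w ∈ U, w ∈ G.ends e} := by
    rintro e (rfl | rfl)
    · exact ⟨he₁ ▸ Sym2.mem_mk_right _ _, w₁, hw₁, he₁ ▸ Sym2.mem_mk_left _ _⟩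
    · exact ⟨he₂' ▸ Sym2.mem_mk_right _ _, w₂, hw₂, he₂' ▸ Sym2.mem_mk_left _ _⟩
  calc 2 = ({e₁, e₂} : Set E).ncard := (Set.ncard_pair (Ne.symm he₂)).symm
    _ ≤ _ := Set.ncard_le_ncard hsub (Set.toFinite _)

end OffVertex

def pieceEdges {ι : Type} (U : ι → Set V) (x : V) (loopAssign : ∀ e, G.ends e = s(x, x) → ι)
    (i : ι) : Set E :=
  {e | (∃ v ∈ U i, v ∈ G.ends e) ∨ ∃ h : G.ends e = s(x, x), loopAssign e h = i}

section Pieces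

variable {G} {ι : Type} {x : V} {U : ι → Set V} (loopAssign : ∀ e, G.ends e = s(x, x) → ι)

theorem existsUnique_mem_pieceEdges (hclosed : ∀ i, ∀ u ∈ U i, ∀ w, G.AdjOffV x u w → w ∈ U i)
    (hx : ∀ i, x ∉ U i) (hcover : ∀ v, v ≠ x → ∃! i, v ∈ U i) (e : E) :
    ∃! i, e ∈ G.pieceEdges U x loopAssign i := by
  by_cases h : ∃ v ∈ G.ends e, v ≠ x
  · obtain ⟨v, hve, hvx⟩ := h
    obtain ⟨i, hi, huniq⟩ := hcover v hvx
    refine ⟨i, Or.inl ⟨v, hi, hve⟩, fun j hj => ?_⟩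
    rcases hj with ⟨w, hw, hwe⟩ | ⟨hloop, -⟩
    · exact huniq j (mem_of_mem_ends (hclosed j) (hx j) hw hwe hve hvx)
    · rw [hloop, Sym2.mem_iff, or_self] at hve
      exact absurd hve hvx
  · push Not at h
    have hloop := Sym2.eq_diag_of_forall_mem_eq h
    refine ⟨loopAssign e hloop, Or.inr ⟨hloop, rfl⟩, fun j hj => ?_⟩
    rcases hj with ⟨w, hw, hwe⟩ | ⟨-, rfl⟩
    · exact absurd (h w hwe ▸ hw) (hx j)
    · rfl

theorem two_le_degIn_pieceEdges [Finite E] (hconn : G.Connected) (hleaf : G.Leafless)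
    (hbridgeless : ∀ e, ¬ G.IsBridge e) {i : ι}
    (hclosed : ∀ u ∈ U i, ∀ w, G.AdjOffV x u w → w ∈ U i) (hx : x ∉ U i) (hU : (U i).Nonempty) :
    ∀ v ∈ U i ∪ {x}, 2 ≤ G.degIn (G.pieceEdges U x loopAssign i) v := by
  rintro v (hv | hv)
  · rw [G.degIn_eq_degree (F := G.pieceEdges U x loopAssign i) fun e hve => Or.inl ⟨v, hv, hve⟩]
    exact hleaf v
  · obtain rfl : x = v := (Set.mem_singleton_iff.mp hv).symm
    calc 2 ≤ _ := two_le_ncard_edges_to hconn hbridgeless hclosed hx hU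
      _ ≤ {e ∈ G.pieceEdges U x loopAssign i | x ∈ G.ends e}.ncard :=
        Set.ncard_le_ncard fun e ⟨hve, w, hw, hwe⟩ => ⟨Or.inl ⟨w, hw, hwe⟩, hve⟩
      _ ≤ G.degIn _ x := Nat.le_add_right _ _

end Pieces

end Multigraph

theorem betti_decomposition_at_vertex_general {V E : Type} [Fintype V] [Fintype E]
    (G : Multigraph V E) (g : ℕ)
    (hconn : G.Connected) (hleaf : G.Leafless)
    (hbridgeless : ∀ e, ¬ G.IsBridge e)
    (hbetti : Fintype.card E + 1 = Fintype.card V + g)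
    (x : V) (k : ℕ) (U : Fin k → Set V)
    -- each `U i` is a connected component of `G ∖ {x}` …
    (hcomp : ∀ i, ∃ v, v ≠ x ∧
      U i = {w | w ≠ x ∧ Relation.ReflTransGen (G.AdjOffV x) v w})
    -- … and every vertex of `G ∖ {x}` lies in exactly one `U i`
    (hcover : ∀ v, v ≠ x → ∃! i, v ∈ U i)
    -- an assignment of the loops at `x` to the components
    (loopAssign : ∀ e, G.ends e = s(x, x) → Fin k) :
    ∃ gs : Fin k → ℕ,
      (∀ i, ({e | (∃ v ∈ U i, v ∈ G.ends e) ∨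
            ∃ h : G.ends e = s(x, x), loopAssign e h = i} : Set E).ncard + 1 =
          (U i ∪ {x} : Set V).ncard + gs i) ∧
      (∀ i, 1 ≤ gs i) ∧
      (∑ i, gs i) = g ∧
      (∀ i, ∀ v ∈ (U i ∪ {x} : Set V),
        2 ≤ G.degIn {e | (∃ v ∈ U i, v ∈ G.ends e) ∨
          ∃ h : G.ends e = s(x, x), loopAssign e h = i} v) := by
  have hx : ∀ i, x ∉ U i := fun i hxU => by
    obtain ⟨v, -, hU⟩ := hcomp i
    exact (hU ▸ hxU).1 rfl
  have hclosed : ∀ i, ∀ u ∈ U i, ∀ w, G.AdjOffV x u w → w ∈ U i := fun i u hu w huw => by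
    obtain ⟨v, -, hU⟩ := hcomp i
    rw [hU] at hu ⊢
    exact ⟨huw.2.1, hu.2.tail huw⟩
  have hne : ∀ i, (U i).Nonempty := fun i => by
    obtain ⟨v, hv, hU⟩ := hcomp i
    exact ⟨v, hU ▸ ⟨hv, .refl⟩⟩
  change ∃ gs : Fin k → ℕ, (∀ i, (G.pieceEdges U x loopAssign i).ncard + 1 = _) ∧ _ ∧ _ ∧
    ∀ i, ∀ v ∈ U i ∪ {x}, 2 ≤ G.degIn (G.pieceEdges U x loopAssign i) v
  set Ei := G.pieceEdges U x loopAssign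
  have hleafi : ∀ i, ∀ v ∈ U i ∪ {x}, 2 ≤ G.degIn (Ei i) v := fun i =>
    Multigraph.two_le_degIn_pieceEdges loopAssign hconn hleaf hbridgeless (hclosed i) (hx i)
      (hne i)
  have hcardU : ∀ i, (U i ∪ {x}).ncard = (U i).ncard + 1 := fun i => by
    rw [Set.union_singleton, Set.ncard_insert_of_notMem (hx i)]
  have hUE : ∀ i, (U i).ncard + 1 ≤ (Ei i).ncard := fun i =>
    hcardU i ▸ G.ncard_le_ncard_of_two_le_degIn (hleafi i)
  have hE : Fintype.card E = ∑ i, (Ei i).ncard := by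
    rw [← Nat.card_eq_fintype_card, ← Set.ncard_univ]
    exact Set.ncard_eq_sum_ncard_of_existsUnique (fun _ => Set.subset_univ _)
      fun e _ => Multigraph.existsUnique_mem_pieceEdges loopAssign hclosed hx hcover e
  have hV : Fintype.card V = 1 + ∑ i, (U i).ncard := by
    rw [← Nat.card_eq_fintype_card, ← Set.ncard_add_ncard_compl {x}, Set.ncard_singleton]
    exact congrArg _ (Set.ncard_eq_sum_ncard_of_existsUnique
      (fun i _ hv hvx => hx i (Set.mem_singleton_iff.mp hvx ▸ hv)) hcover)
  refine ⟨fun i => (Ei i).ncard - (U i).ncard, fun i => ?_, fun i => ?_, ?_, hleafi⟩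
  · have := hUE i
    have := hcardU i
    dsimp only
    omega
  · have := hUE i
    dsimp only
    omega
  · rw [Finset.sum_tsub_distrib _ fun i _ => (Nat.le_succ _).trans (hUE i)]
    omega

/-- Let `G` be a connected leafless graph with no bridges, of Betti
number `g ≥ 1`, and let `x` be a vertex of `G`.  Let `G ∖ {x} = U_1 ⊔ ⋯ ⊔ U_k` be the
decomposition into connected components, and for each `i` let `G_i` be the subgraph of `G`
with vertex set `U_i ∪ {x}`, whose edges are those edges of `G` with an endpoint in `U_i`
together with the loops at `x` assigned to the index `i` (by a given assignment
`loopAssign` of the loops at `x` to indices).  Let `g_i` be the Betti number of `G_i`.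
Then `g = g_1 + ⋯ + g_k`, each `g_i ≥ 1`, and each `G_i` is leafless. -/
theorem betti_decomposition_at_vertex {V E : Type} [Fintype V] [Fintype E]
    (G : Multigraph V E) (g : ℕ) (hg : 1 ≤ g)
    (hconn : G.Connected) (hleaf : G.Leafless)
    (hbridgeless : ∀ e, ¬ G.IsBridge e)
    (hbetti : Fintype.card E + 1 = Fintype.card V + g)
    (x : V) (k : ℕ) (U : Fin k → Set V)
    -- each `U i` is a connected component of `G ∖ {x}` …
    (hcomp : ∀ i, ∃ v, v ≠ x ∧
      U i = {w | w ≠ x ∧ Relation.ReflTransGen (G.AdjOffV x) v w})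
    -- … and every vertex of `G ∖ {x}` lies in exactly one `U i`
    (hcover : ∀ v, v ≠ x → ∃! i, v ∈ U i)
    -- an assignment of the loops at `x` to the components
    (loopAssign : ∀ e, G.ends e = s(x, x) → Fin k) :
    ∃ gs : Fin k → ℕ,
      (∀ i, ({e | (∃ v ∈ U i, v ∈ G.ends e) ∨
            ∃ h : G.ends e = s(x, x), loopAssign e h = i} : Set E).ncard + 1 =
          (U i ∪ {x} : Set V).ncard + gs i) ∧
      (∀ i, 1 ≤ gs i) ∧
      (∑ i, gs i) = g ∧
      (∀ i, ∀ v ∈ (U i ∪ {x} : Set V),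
        2 ≤ G.degIn {e | (∃ v ∈ U i, v ∈ G.ends e) ∨
          ∃ h : G.ends e = s(x, x), loopAssign e h = i} v) :=
  betti_decomposition_at_vertex_general G g hconn hleaf hbridgeless hbetti x k U hcomp hcover
    loopAssign
end
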